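/- Suppose X ∈ ℝ^{n×r} and Z ∈ ℝ^{n×r★} are in block form X = [[X₁,0],[0,X₂]] with X₁ ∈ ℝ^{k×k}, σ_min(X₁) ≥ σ_max(X₂), and Z = [Z₁; Z₂] with Z₁ ∈ ℝ^{k×r★}, k ≥ r★. If ‖XXᵀ − ZZᵀ‖_F ≤ ρ λ_min(ZᵀZ) with ρ² < 1/2, then λ_min(Z₁ᵀZ₁) ≥ λ_max(Z₂ᵀZ₂). -/

import Mathlib

open Matrix BigOperators

/-- Frobenius norm of a real matrix. -/
noncomputable def frob {n m : Type*} [Fintype n] [Fintype m] (A : Matrix n m ℝ) : ℝ :=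
  Real.sqrt (∑ i, ∑ j, (A i j) ^ 2)

/-- Smallest eigenvalue of a Hermitian real matrix. -/
noncomputable def lammin {n : Type*} [Fintype n] [DecidableEq n] {A : Matrix n n ℝ}
    (hA : A.IsHermitian) : ℝ := ⨅ i, hA.eigenvalues i

/-- Largest eigenvalue of a Hermitian real matrix. -/
noncomputable def lammax {n : Type*} [Fintype n] [DecidableEq n] {A : Matrix n n ℝ}
    (hA : A.IsHermitian) : ℝ := ⨆ i, hA.eigenvalues i

/-- Largest singular value. -/
noncomputable def smax {n m : Type*} [Fintype n] [Fintype m] [DecidableEq m]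
    (A : Matrix n m ℝ) : ℝ :=
  Real.sqrt (lammax (Matrix.isHermitian_conjTranspose_mul_self A))

/-- Smallest singular value. -/
noncomputable def smin {n m : Type*} [Fintype n] [Fintype m] [DecidableEq m]
    (A : Matrix n m ℝ) : ℝ :=
  Real.sqrt (lammin (Matrix.isHermitian_conjTranspose_mul_self A))

section Aux

variable {n m : Type*} [Fintype n] [Fintype m]

lemma frob_nonneg (A : Matrix n m ℝ) : 0 ≤ frob A := Real.sqrt_nonneg _

lemma frob_sq (A : Matrix n m ℝ) : frob A ^ 2 = ∑ i, ∑ j, (A i j) ^ 2 :=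
  Real.sq_sqrt (by positivity)

lemma frob_neg (A : Matrix n m ℝ) : frob (-A) = frob A := by
  unfold frob
  simp

lemma frob_transpose (A : Matrix n m ℝ) : frob Aᵀ = frob A := by
  unfold frob
  congr 1
  rw [Finset.sum_comm]
  simp [Matrix.transpose_apply]

omit [Fintype n] [Fintype m] in
lemma real_conjT (A : Matrix n m ℝ) : Aᴴ = Aᵀ := by
  ext i j
  simp [Matrix.conjTranspose_apply]

lemma dot_self_eq_sum_sq (v : n → ℝ) : v ⬝ᵥ v = ∑ i, v i ^ 2 := by
  simp [dotProduct, sq]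

lemma dot_shift (A : Matrix n m ℝ) (x : n → ℝ) (y : m → ℝ) :
    (Aᵀ *ᵥ x) ⬝ᵥ y = x ⬝ᵥ (A *ᵥ y) := by
  rw [Matrix.mulVec_transpose, Matrix.dotProduct_mulVec]

lemma sqsum_mulVec (A : Matrix n m ℝ) (y : m → ℝ) :
    ∑ i, (A *ᵥ y) i ^ 2 = y ⬝ᵥ ((Aᴴ * A) *ᵥ y) := by
  have h := dot_shift A (A *ᵥ y) y
  rw [real_conjT, ← Matrix.mulVec_mulVec, ← dot_self_eq_sum_sq, ← h, dotProduct_comm]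

lemma sqsum_conjT_mulVec (A : Matrix n m ℝ) (x : n → ℝ) :
    ∑ j, (Aᴴ *ᵥ x) j ^ 2 = x ⬝ᵥ ((A * Aᴴ) *ᵥ x) := by
  rw [real_conjT, ← Matrix.mulVec_mulVec, ← dot_self_eq_sum_sq]
  exact dot_shift A x (Aᵀ *ᵥ x)

lemma quadform_le_frob (A : Matrix n n ℝ) (x : n → ℝ) :
    x ⬝ᵥ (A *ᵥ x) ≤ frob A * ∑ i, x i ^ 2 := by
  have hS : (0:ℝ) ≤ ∑ i, x i ^ 2 := by positivity
  have hF := frob_nonneg A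
  have hcs := Finset.sum_mul_sq_le_sq_mul_sq Finset.univ
      (fun ij : n × n => A ij.1 ij.2) (fun ij : n × n => x ij.1 * x ij.2)
  have h1 : (∑ ij : n × n, A ij.1 ij.2 * (x ij.1 * x ij.2)) = x ⬝ᵥ (A *ᵥ x) := by
    rw [Fintype.sum_prod_type]
    simp only [dotProduct, Matrix.mulVec, Finset.mul_sum]
    exact Finset.sum_congr rfl fun i _ => Finset.sum_congr rfl fun j _ => by ring
  have h2 : (∑ ij : n × n, (x ij.1 * x ij.2) ^ 2) = (∑ i, x i ^ 2) ^ 2 := by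
    rw [sq, Finset.sum_mul_sum, Fintype.sum_prod_type]
    exact Finset.sum_congr rfl fun i _ => Finset.sum_congr rfl fun j _ => by ring
  have h3 : (∑ ij : n × n, (A ij.1 ij.2) ^ 2) = frob A ^ 2 := by
    rw [frob_sq, Fintype.sum_prod_type]
  rw [h1, h2, h3] at hcs
  nlinarith [hcs, mul_nonneg hF hS]

lemma sqsum_mulVec_le_frob (A : Matrix n m ℝ) (y : m → ℝ) :
    ∑ i, (A *ᵥ y) i ^ 2 ≤ frob A ^ 2 * ∑ j, y j ^ 2 := by
  rw [frob_sq, Finset.sum_mul]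
  apply Finset.sum_le_sum
  intro i _
  have hcs := Finset.sum_mul_sq_le_sq_mul_sq Finset.univ (fun j => A i j) y
  have h1 : (A *ᵥ y) i = ∑ j, A i j * y j := by
    simp [Matrix.mulVec, dotProduct]
  rw [h1]
  exact hcs

end Aux

section Spectral

variable {n : Type*} [Fintype n] [DecidableEq n] {A : Matrix n n ℝ} (hA : A.IsHermitian)

lemma lammin_le_eig (i : n) : lammin hA ≤ hA.eigenvalues i :=
  ciInf_le (Finite.bddBelow_range _) i

lemma eig_le_lammax (i : n) : hA.eigenvalues i ≤ lammax hA :=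
  le_ciSup (Finite.bddAbove_range _) i

lemma real_spectral :
    ∃ U : Matrix n n ℝ, U * Uᵀ = 1 ∧ Uᵀ * U = 1 ∧
      A = U * Matrix.diagonal hA.eigenvalues * Uᵀ := by
  refine ⟨(hA.eigenvectorUnitary : Matrix n n ℝ), ?_, ?_, ?_⟩
  · have h := Matrix.mem_unitaryGroup_iff.mp (hA.eigenvectorUnitary).2
    rwa [Matrix.star_eq_conjTranspose, real_conjT] at h
  · have h := Matrix.mem_unitaryGroup_iff'.mp (hA.eigenvectorUnitary).2
    rwa [Matrix.star_eq_conjTranspose, real_conjT] at h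
  · have h := hA.spectral_theorem
    rwa [Unitary.conjStarAlgAut_apply, Matrix.star_eq_conjTranspose, real_conjT, RCLike.ofReal_real_eq_id,
      Function.id_comp] at h

lemma quadform_eq_eigen (x : n → ℝ) :
    ∀ U : Matrix n n ℝ, U * Uᵀ = 1 → A = U * Matrix.diagonal hA.eigenvalues * Uᵀ →
    x ⬝ᵥ (A *ᵥ x) = ∑ i, hA.eigenvalues i * (Uᵀ *ᵥ x) i ^ 2 := by
  intro U hU1 hsp
  have h := dot_shift U x (Matrix.diagonal hA.eigenvalues *ᵥ (Uᵀ *ᵥ x))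
  conv_lhs => rw [hsp]
  rw [← Matrix.mulVec_mulVec, ← Matrix.mulVec_mulVec, ← h]
  simp only [dotProduct, Matrix.mulVec_diagonal]
  exact Finset.sum_congr rfl fun i _ => by ring

lemma sumsq_transpose_unitary (x : n → ℝ) (U : Matrix n n ℝ) (hU1 : U * Uᵀ = 1) :
    ∑ i, (Uᵀ *ᵥ x) i ^ 2 = ∑ i, x i ^ 2 := by
  rw [← dot_self_eq_sum_sq, ← dot_self_eq_sum_sq (v := x)]
  rw [dot_shift U x (Uᵀ *ᵥ x), Matrix.mulVec_mulVec, hU1, Matrix.one_mulVec]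

lemma quadform_ge_lammin (x : n → ℝ) :
    lammin hA * ∑ i, x i ^ 2 ≤ x ⬝ᵥ (A *ᵥ x) := by
  obtain ⟨U, hU1, hU2, hsp⟩ := real_spectral hA
  rw [quadform_eq_eigen hA x U hU1 hsp, ← sumsq_transpose_unitary x U hU1, Finset.mul_sum]
  exact Finset.sum_le_sum fun i _ =>
    mul_le_mul_of_nonneg_right (lammin_le_eig hA i) (sq_nonneg _)

lemma quadform_le_lammax (x : n → ℝ) :
    x ⬝ᵥ (A *ᵥ x) ≤ lammax hA * ∑ i, x i ^ 2 := by
  obtain ⟨U, hU1, hU2, hsp⟩ := real_spectral hA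
  rw [quadform_eq_eigen hA x U hU1 hsp, ← sumsq_transpose_unitary x U hU1, Finset.mul_sum]
  exact Finset.sum_le_sum fun i _ =>
    mul_le_mul_of_nonneg_right (eig_le_lammax hA i) (sq_nonneg _)

lemma exists_unit_eigvec (c : ℝ) (i₀ : n) (hc : hA.eigenvalues i₀ = c) :
    ∃ v : n → ℝ, (∑ i, v i ^ 2) = 1 ∧ A *ᵥ v = c • v := by
  obtain ⟨U, hU1, hU2, hsp⟩ := real_spectral hA
  refine ⟨U *ᵥ Pi.single i₀ 1, ?_, ?_⟩
  · have h1 : Uᵀ *ᵥ (U *ᵥ Pi.single i₀ 1) = Pi.single i₀ 1 := by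
      rw [Matrix.mulVec_mulVec, hU2, Matrix.one_mulVec]
    have h2 := sumsq_transpose_unitary (U *ᵥ Pi.single i₀ 1) U hU1
    rw [h1] at h2
    rw [← h2]
    simp [Pi.single_apply, Finset.sum_ite_eq']
  · have hsingle : Matrix.diagonal hA.eigenvalues *ᵥ Pi.single i₀ 1
        = c • (Pi.single i₀ 1 : n → ℝ) := by
      ext j
      rcases eq_or_ne j i₀ with rfl | hj
      · simp [Matrix.mulVec_diagonal, hc]
      · simp [Matrix.mulVec_diagonal, Pi.single_apply, hj]
    conv_lhs => rw [hsp]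
    rw [← Matrix.mulVec_mulVec, ← Matrix.mulVec_mulVec,
      Matrix.mulVec_mulVec (Pi.single i₀ 1) Uᵀ U, hU2, Matrix.one_mulVec,
      hsingle, Matrix.mulVec_smul]

end Spectral

section Tricks

variable {n m : Type*} [Fintype n] [Fintype m]

/-- `‖Aᴴx‖² ≤ λ_max(AᴴA) ‖x‖²` for arbitrary rectangular `A`. -/
lemma sqsum_conjT_le_lammax [DecidableEq m] (A : Matrix n m ℝ) (y : n → ℝ) :
    ∑ j, (Aᴴ *ᵥ y) j ^ 2
      ≤ lammax (Matrix.isHermitian_conjTranspose_mul_self A) * ∑ i, y i ^ 2 := by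
  classical
  set L := lammax (Matrix.isHermitian_conjTranspose_mul_self A) with hL
  set w : m → ℝ := Aᴴ *ᵥ y with hw
  have hL0 : 0 ≤ L := by
    rcases isEmpty_or_nonempty m with hm | hm
    · have : L = 0 := by
        rw [hL]; unfold lammax; rw [iSup, Set.range_eq_empty, Real.sSup_empty]
      simp [this]
    · obtain ⟨i⟩ := hm
      exact le_trans (Matrix.eigenvalues_conjTranspose_mul_self_nonneg A i)
        (eig_le_lammax _ i)
  have hG : (∑ j, w j ^ 2) = y ⬝ᵥ (A *ᵥ w) := by
    rw [← dot_self_eq_sum_sq, hw, real_conjT, dot_shift A y (Aᵀ *ᵥ y)]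
  have hAw : ∑ i, (A *ᵥ w) i ^ 2 ≤ L * ∑ j, w j ^ 2 := by
    rw [sqsum_mulVec A w]
    exact quadform_le_lammax _ w
  have hcs := Finset.sum_mul_sq_le_sq_mul_sq Finset.univ y (fun i => (A *ᵥ w) i)
  have hycs : y ⬝ᵥ (A *ᵥ w) = ∑ i, y i * (A *ᵥ w) i := by
    simp [dotProduct]
  -- (∑ w²)² ≤ (∑ y²) * (L * ∑ w²)
  have key : (∑ j, w j ^ 2) ^ 2 ≤ (∑ i, y i ^ 2) * (L * ∑ j, w j ^ 2) := by
    calc (∑ j, w j ^ 2) ^ 2 = (∑ i, y i * (A *ᵥ w) i) ^ 2 := by rw [hG, hycs]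
      _ ≤ (∑ i, y i ^ 2) * ∑ i, (A *ᵥ w) i ^ 2 := hcs
      _ ≤ (∑ i, y i ^ 2) * (L * ∑ j, w j ^ 2) := by
          apply mul_le_mul_of_nonneg_left hAw (by positivity)
  have hW0 : (0:ℝ) ≤ ∑ j, w j ^ 2 := by positivity
  rcases eq_or_lt_of_le hW0 with h0 | h0
  · rw [← h0]
    positivity
  · nlinarith [key, h0]

/-- For a *square* matrix `A`, `‖Aᵀx‖² ≥ λ_min(AᴴA) ‖x‖²`. -/
lemma lammin_sq_le_sqsum_conjT [DecidableEq n] (A : Matrix n n ℝ) (x : n → ℝ) :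
    lammin (Matrix.isHermitian_conjTranspose_mul_self A) * ∑ i, x i ^ 2
      ≤ ∑ j, (Aᴴ *ᵥ x) j ^ 2 := by
  classical
  set c := lammin (Matrix.isHermitian_conjTranspose_mul_self A) with hc
  rcases isEmpty_or_nonempty n with hn | hn
  · simp [Finset.sum_of_isEmpty]
  have hc0 : 0 ≤ c := le_ciInf fun i =>
    Matrix.eigenvalues_conjTranspose_mul_self_nonneg A i
  rcases eq_or_lt_of_le hc0 with h0 | h0
  · rw [← h0]
    simp only [zero_mul]
    positivity
  -- c > 0 : A is injective hence surjective
  have hlow : ∀ w : n → ℝ, c * ∑ i, w i ^ 2 ≤ ∑ i, (A *ᵥ w) i ^ 2 := by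
    intro w
    rw [sqsum_mulVec A w]
    exact quadform_ge_lammin _ w
  have hinj : Function.Injective A.mulVecLin := by
    rw [injective_iff_map_eq_zero]
    intro w hw
    have h1 : A *ᵥ w = 0 := hw
    have h2 := hlow w
    rw [h1] at h2
    simp only [Pi.zero_apply] at h2
    have h3 : (∑ i, w i ^ 2) ≤ 0 := by
      have : (∑ i : n, (0:ℝ) ^ 2) = 0 := by simp
      nlinarith [h2, h0]
    have h4 : (∑ i, w i ^ 2) = 0 := le_antisymm h3 (by positivity)
    funext i
    have := Finset.sum_eq_zero_iff_of_nonneg (fun j _ => sq_nonneg (w j)) |>.mp h4 i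
      (Finset.mem_univ i)
    simpa using pow_eq_zero_iff (n := 2) (by norm_num) |>.mp this
  have hsurj : Function.Surjective A.mulVecLin :=
    LinearMap.surjective_of_injective hinj
  obtain ⟨w, hww⟩ := hsurj x
  have hww' : A *ᵥ w = x := hww
  have h1 : (∑ i, x i ^ 2) = (Aᵀ *ᵥ x) ⬝ᵥ w := by
    rw [dot_shift A x w, ← hww', ← dot_self_eq_sum_sq]
  have hcs := Finset.sum_mul_sq_le_sq_mul_sq Finset.univ (fun j => (Aᵀ *ᵥ x) j) w
  have h2 : ((Aᵀ *ᵥ x) ⬝ᵥ w) = ∑ j, (Aᵀ *ᵥ x) j * w j := by simp [dotProduct]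
  have hcw := hlow w
  rw [hww'] at hcw
  -- (∑x²)² ≤ (∑(Aᵀx)²) * ∑w²  and  c ∑w² ≤ ∑x²
  rw [real_conjT]
  set S := ∑ i, x i ^ 2
  set G := ∑ j, (Aᵀ *ᵥ x) j ^ 2
  set W := ∑ i, w i ^ 2
  have key : S ^ 2 ≤ G * W := by
    calc S ^ 2 = ((Aᵀ *ᵥ x) ⬝ᵥ w) ^ 2 := by rw [h1]
      _ = (∑ j, (Aᵀ *ᵥ x) j * w j) ^ 2 := by rw [h2]
      _ ≤ G * W := hcs
  have hS0 : 0 ≤ S := by positivity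
  have hG0 : 0 ≤ G := by positivity
  have hW0 : 0 ≤ W := by positivity
  rcases eq_or_lt_of_le hS0 with hS | hS
  · rw [← hS, mul_zero]
    exact hG0
  · nlinarith [key, hcw, h0, hS]

end Tricks

section More

lemma exists_unit_small {n m : Type*} [Fintype n] [Fintype m] [DecidableEq n] [DecidableEq m]
    [Nonempty n] [Nonempty m] (A : Matrix n m ℝ)
    (hcard : Fintype.card m ≤ Fintype.card n) :
    ∃ x : n → ℝ, (∑ i, x i ^ 2) = 1 ∧
      (∑ j, (Aᴴ *ᵥ x) j ^ 2) ≤ lammin (Matrix.isHermitian_conjTranspose_mul_self A) := by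
  classical
  have hW : (A * Aᴴ).IsHermitian := Matrix.isHermitian_mul_conjTranspose_self A
  obtain ⟨i₀, hi₀⟩ := Finite.exists_min hW.eigenvalues
  have hceq : hW.eigenvalues i₀ = lammin hW :=
    le_antisymm (le_ciInf hi₀) (lammin_le_eig hW i₀)
  obtain ⟨x, hx1, hx2⟩ := exists_unit_eigvec hW (lammin hW) i₀ hceq
  have hxval : (∑ j, (Aᴴ *ᵥ x) j ^ 2) = lammin hW := by
    rw [sqsum_conjT_mulVec A x, hx2, dotProduct_smul, dot_self_eq_sum_sq, hx1]
    simp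
  refine ⟨x, hx1, ?_⟩
  rw [hxval]
  by_contra hcb
  push_neg at hcb
  set b := lammin (Matrix.isHermitian_conjTranspose_mul_self A) with hb
  set c := lammin hW with hc
  have hb0 : 0 ≤ b := le_ciInf fun i =>
    Matrix.eigenvalues_conjTranspose_mul_self_nonneg A i
  have hc0 : 0 < c := lt_of_le_of_lt hb0 hcb
  have hlow : ∀ y : n → ℝ, c * ∑ i, y i ^ 2 ≤ ∑ j, (Aᴴ *ᵥ y) j ^ 2 := by
    intro y
    rw [sqsum_conjT_mulVec A y]
    exact quadform_ge_lammin hW y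
  have hinj : Function.Injective (Aᴴ).mulVecLin := by
    rw [injective_iff_map_eq_zero]
    intro y hy
    have h1 : Aᴴ *ᵥ y = 0 := hy
    have h2 := hlow y
    rw [h1] at h2
    simp only [Pi.zero_apply] at h2
    have h5 : (∑ j : m, (0:ℝ) ^ 2) = 0 := by simp
    have hy0 : (0:ℝ) ≤ ∑ i, y i ^ 2 := by positivity
    have h4 : (∑ i, y i ^ 2) = 0 := by nlinarith [h2, hc0, hy0]
    funext i
    have := (Finset.sum_eq_zero_iff_of_nonneg (fun j _ => sq_nonneg (y j))).mp h4 i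
      (Finset.mem_univ i)
    simpa using (pow_eq_zero_iff (n := 2) (by norm_num)).mp this
  have hfr : Module.finrank ℝ (n → ℝ) = Module.finrank ℝ (m → ℝ) := by
    have h1 := LinearMap.finrank_le_finrank_of_injective hinj
    rw [Module.finrank_pi, Module.finrank_pi] at h1 ⊢
    omega
  have hsurj : Function.Surjective (Aᴴ).mulVecLin :=
    (LinearMap.injective_iff_surjective_of_finrank_eq_finrank hfr).mp hinj
  obtain ⟨j₀, hj₀⟩ := Finite.exists_min (Matrix.isHermitian_conjTranspose_mul_self A).eigenvalues
  have hbeq : (Matrix.isHermitian_conjTranspose_mul_self A).eigenvalues j₀ = b :=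
    le_antisymm (le_ciInf hj₀) (lammin_le_eig _ j₀)
  obtain ⟨v, hv1, hv2⟩ := exists_unit_eigvec (Matrix.isHermitian_conjTranspose_mul_self A) b j₀ hbeq
  obtain ⟨y, hy⟩ := hsurj v
  have hyv : Aᴴ *ᵥ y = v := hy
  have h1 : (1:ℝ) = y ⬝ᵥ (A *ᵥ v) := by
    have e1 : (1:ℝ) = v ⬝ᵥ v := by rw [dot_self_eq_sum_sq, hv1]
    have e2 : v ⬝ᵥ v = (Aᴴ *ᵥ y) ⬝ᵥ v := by rw [hyv]
    have e3 : (Aᴴ *ᵥ y) ⬝ᵥ v = y ⬝ᵥ (A *ᵥ v) := by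
      rw [real_conjT]
      exact dot_shift A y v
    rw [e1, e2, e3]
  have hAv : ∑ i, (A *ᵥ v) i ^ 2 = b := by
    rw [sqsum_mulVec A v, hv2, dotProduct_smul, dot_self_eq_sum_sq, hv1]
    simp
  have hysq : c * (∑ i, y i ^ 2) ≤ 1 := by
    have h := hlow y
    rw [hyv] at h
    rw [← hv1]
    exact h
  have hcs := Finset.sum_mul_sq_le_sq_mul_sq Finset.univ y (fun i => (A *ᵥ v) i)
  have h2 : y ⬝ᵥ (A *ᵥ v) = ∑ i, y i * (A *ᵥ v) i := by simp [dotProduct]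
  have hy0 : (0:ℝ) ≤ ∑ i, y i ^ 2 := by positivity
  -- 1 ≤ (∑ y²) * b  and c (∑y²) ≤ 1, b < c
  have key : (1:ℝ) ≤ (∑ i, y i ^ 2) * b := by
    calc (1:ℝ) = (y ⬝ᵥ (A *ᵥ v)) ^ 2 := by rw [← h1]; norm_num
      _ = (∑ i, y i * (A *ᵥ v) i) ^ 2 := by rw [h2]
      _ ≤ (∑ i, y i ^ 2) * ∑ i, (A *ᵥ v) i ^ 2 := hcs
      _ = (∑ i, y i ^ 2) * b := by rw [hAv]
  have hY0 : 0 < ∑ i, y i ^ 2 := by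
    rcases eq_or_lt_of_le hy0 with h0 | h0
    · rw [← h0] at key
      simp at key
      linarith
    · exact h0
  have h6 : (∑ i, y i ^ 2) * b < (∑ i, y i ^ 2) * c := mul_lt_mul_of_pos_left hcb hY0
  have h7 : (∑ i, y i ^ 2) * c ≤ 1 := by linarith [hysq, mul_comm c (∑ i, y i ^ 2)]
  linarith [key, h6, h7]

lemma frob_fromBlocks_sq {n₁ n₂ m₁ m₂ : Type*} [Fintype n₁] [Fintype n₂] [Fintype m₁]
    [Fintype m₂] (A : Matrix n₁ m₁ ℝ) (B : Matrix n₁ m₂ ℝ) (C : Matrix n₂ m₁ ℝ)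
    (D : Matrix n₂ m₂ ℝ) :
    frob (Matrix.fromBlocks A B C D) ^ 2
      = frob A ^ 2 + frob B ^ 2 + frob C ^ 2 + frob D ^ 2 := by
  rw [frob_sq, frob_sq, frob_sq, frob_sq, frob_sq]
  rw [Fintype.sum_sum_type]
  simp only [Fintype.sum_sum_type, Matrix.fromBlocks_apply₁₁, Matrix.fromBlocks_apply₁₂,
    Matrix.fromBlocks_apply₂₁, Matrix.fromBlocks_apply₂₂, Finset.sum_add_distrib]
  ring

lemma final_arith (a b lam mm s T Bf Cf F ρ : ℝ) (ha0 : 0 < a) (hb0 : 0 ≤ b) (hab : b < a)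
    (hsm : s ≤ mm) (hT0 : 0 ≤ T) (hTb : mm - b ≤ T) (hBf0 : 0 ≤ Bf) (hBfa : a - s ≤ Bf)
    (hC : a ^ 2 * b ≤ Cf ^ 2 * a) (hlam0 : 0 ≤ lam) (hlam : lam ≤ a + b) (hF0 : 0 ≤ F)
    (hF2 : F ^ 2 = T ^ 2 + Cf ^ 2 + Cf ^ 2 + Bf ^ 2) (hF : F ≤ ρ * lam) (hρ0 : 0 ≤ ρ)
    (hρ : ρ ^ 2 < 1 / 2) : False := by
  have hab0 : 0 < a + b := by linarith
  have hCf2 : a * b ≤ Cf ^ 2 := by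
    have he : a ^ 2 * b = (a * b) * a := by ring
    rw [he] at hC
    exact (mul_le_mul_iff_of_pos_right ha0).mp hC
  have hcase : (a - b) ^ 2 / 2 ≤ T ^ 2 + Bf ^ 2 := by
    rcases le_total b mm with h1 | h1
    · rcases le_total s a with h2 | h2
      · have h3 : a - b ≤ T + Bf := by linarith
        have h4 : (0:ℝ) ≤ a - b := by linarith
        have h5 : (a - b) ^ 2 ≤ (T + Bf) ^ 2 := pow_le_pow_left₀ h4 h3 2
        have h6 : (T + Bf) ^ 2 ≤ 2 * (T ^ 2 + Bf ^ 2) := by nlinarith [sq_nonneg (T - Bf)]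
        linarith
      · have h4 : (0:ℝ) ≤ a - b := by linarith
        have h3 : a - b ≤ T := by linarith
        have h5 : (a - b) ^ 2 ≤ T ^ 2 := pow_le_pow_left₀ h4 h3 2
        have h6 := sq_nonneg Bf
        have h7 := sq_nonneg (a - b)
        linarith
    · have h4 : (0:ℝ) ≤ a - b := by linarith
      have h3 : a - b ≤ Bf := by linarith
      have h5 : (a - b) ^ 2 ≤ Bf ^ 2 := pow_le_pow_left₀ h4 h3 2
      have h6 := sq_nonneg T
      have h7 := sq_nonneg (a - b)
      linarith
  have h1 : F ^ 2 ≤ ρ ^ 2 * lam ^ 2 := by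
    have h := pow_le_pow_left₀ hF0 hF 2
    rw [mul_pow] at h
    exact h
  have h2 : lam ^ 2 ≤ (a + b) ^ 2 := pow_le_pow_left₀ hlam0 hlam 2
  have h3 : ρ ^ 2 * lam ^ 2 ≤ ρ ^ 2 * (a + b) ^ 2 :=
    mul_le_mul_of_nonneg_left h2 (sq_nonneg ρ)
  have h4 : (a + b) ^ 2 / 2 ≤ F ^ 2 := by
    rw [hF2]
    nlinarith [hcase, hCf2]
  have hab2 : (0:ℝ) < (a + b) ^ 2 := by positivity
  have h5 : ρ ^ 2 * (a + b) ^ 2 < (1 / 2) * (a + b) ^ 2 :=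
    mul_lt_mul_of_pos_right hρ hab2
  linarith [h1, h3, h4, h5]

end More

set_option maxHeartbeats 2000000 in
/-- If `X = [[X₁,0],[0,X₂]]` with `σ_min(X₁) ≥ σ_max(X₂)`, `Z = [Z₁; Z₂]` with
`k ≥ r★`, and `‖XXᵀ − ZZᵀ‖_F ≤ ρ λ_min(ZᵀZ)` with `ρ² < 1/2`, then
`λ_min(Z₁ᵀZ₁) ≥ λ_max(Z₂ᵀZ₂)`. -/
theorem stmt9 {k p q rs : ℕ} (hk : rs ≤ k) (hrs : 0 < rs)
    (X₁ : Matrix (Fin k) (Fin k) ℝ) (X₂ : Matrix (Fin p) (Fin q) ℝ)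
    (Z₁ : Matrix (Fin k) (Fin rs) ℝ) (Z₂ : Matrix (Fin p) (Fin rs) ℝ)
    (hsing : smax X₂ ≤ smin X₁) (ρ : ℝ) (hρpos : 0 ≤ ρ) (hρ : ρ ^ 2 < 1 / 2)
    (hdist :
      frob (Matrix.fromBlocks X₁ 0 0 X₂ * (Matrix.fromBlocks X₁ 0 0 X₂)ᴴ
          - Matrix.fromRows Z₁ Z₂ * (Matrix.fromRows Z₁ Z₂)ᴴ)
        ≤ ρ * lammin (Matrix.isHermitian_conjTranspose_mul_self (Matrix.fromRows Z₁ Z₂))) :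
    lammax (Matrix.isHermitian_conjTranspose_mul_self Z₂)
      ≤ lammin (Matrix.isHermitian_conjTranspose_mul_self Z₁) := by
  classical
  have hk1 : 0 < k := lt_of_lt_of_le hrs hk
  haveI : Nonempty (Fin rs) := ⟨⟨0, hrs⟩⟩
  haveI : Nonempty (Fin k) := ⟨⟨0, hk1⟩⟩
  by_contra hab
  push_neg at hab
  -- notation
  set a := lammax (Matrix.isHermitian_conjTranspose_mul_self Z₂) with ha
  set b := lammin (Matrix.isHermitian_conjTranspose_mul_self Z₁) with hb
  set lam := lammin
      (Matrix.isHermitian_conjTranspose_mul_self (Matrix.fromRows Z₁ Z₂)) with hlam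
  have hb0 : (0:ℝ) ≤ b := by
    rw [hb]
    exact le_ciInf fun i => Matrix.eigenvalues_conjTranspose_mul_self_nonneg Z₁ i
  have ha0 : (0:ℝ) < a := lt_of_le_of_lt hb0 hab
  have hlam0 : (0:ℝ) ≤ lam := by
    rw [hlam]
    exact le_ciInf fun i =>
      Matrix.eigenvalues_conjTranspose_mul_self_nonneg (Matrix.fromRows Z₁ Z₂) i
  -- eigenvectors
  obtain ⟨iu, hiu⟩ :=
    Finite.exists_max (Matrix.isHermitian_conjTranspose_mul_self Z₂).eigenvalues
  have hau : (Matrix.isHermitian_conjTranspose_mul_self Z₂).eigenvalues iu = a :=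
    le_antisymm (eig_le_lammax _ iu) (ciSup_le hiu)
  obtain ⟨u, hu1, hu2⟩ :=
    exists_unit_eigvec (Matrix.isHermitian_conjTranspose_mul_self Z₂) a iu hau
  obtain ⟨iv, hiv⟩ :=
    Finite.exists_min (Matrix.isHermitian_conjTranspose_mul_self Z₁).eigenvalues
  have hbv : (Matrix.isHermitian_conjTranspose_mul_self Z₁).eigenvalues iv = b :=
    le_antisymm (le_ciInf hiv) (lammin_le_eig _ iv)
  obtain ⟨v, hv1, hv2⟩ :=
    exists_unit_eigvec (Matrix.isHermitian_conjTranspose_mul_self Z₁) b iv hbv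
  -- special unit vector for the top-left block
  have hcard : Fintype.card (Fin rs) ≤ Fintype.card (Fin k) := by simpa using hk
  obtain ⟨x, hx1, hx2⟩ := exists_unit_small Z₁ hcard
  rw [← hb] at hx2
  -- scalar facts about X₁, X₂
  set s := smax X₂ ^ 2 with hs
  set mm := smin X₁ ^ 2 with hmm
  have hsm : s ≤ mm := by
    rw [hs, hmm]
    exact pow_le_pow_left₀ (Real.sqrt_nonneg _) hsing 2
  have hmmeq : mm = lammin (Matrix.isHermitian_conjTranspose_mul_self X₁) := by
    rw [hmm]
    unfold smin
    exact Real.sq_sqrt (le_ciInf fun i =>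
      Matrix.eigenvalues_conjTranspose_mul_self_nonneg X₁ i)
  have hsle : lammax (Matrix.isHermitian_conjTranspose_mul_self X₂) ≤ s := by
    rw [hs]
    unfold smax
    rcases le_or_gt 0 (lammax (Matrix.isHermitian_conjTranspose_mul_self X₂)) with h | h
    · rw [Real.sq_sqrt h]
    · have := sq_nonneg (Real.sqrt (lammax (Matrix.isHermitian_conjTranspose_mul_self X₂)))
      linarith
  -- top-left block bound
  set T := frob (X₁ * X₁ᴴ - Z₁ * Z₁ᴴ) with hT
  have hT0 : 0 ≤ T := frob_nonneg _
  have hTb : mm - b ≤ T := by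
    have h1 : mm * (∑ i, x i ^ 2) ≤ ∑ j, (X₁ᴴ *ᵥ x) j ^ 2 := by
      rw [hmmeq]
      exact lammin_sq_le_sqsum_conjT X₁ x
    rw [hx1, mul_one] at h1
    have h3 : x ⬝ᵥ ((X₁ * X₁ᴴ - Z₁ * Z₁ᴴ) *ᵥ x) ≤ T * ∑ i, x i ^ 2 :=
      quadform_le_frob _ x
    rw [hx1, mul_one] at h3
    have h4 : x ⬝ᵥ ((X₁ * X₁ᴴ - Z₁ * Z₁ᴴ) *ᵥ x)
        = (∑ j, (X₁ᴴ *ᵥ x) j ^ 2) - (∑ j, (Z₁ᴴ *ᵥ x) j ^ 2) := by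
      rw [Matrix.sub_mulVec, dotProduct_sub, sqsum_conjT_mulVec X₁ x,
        sqsum_conjT_mulVec Z₁ x]
    linarith [h1, hx2, h3, h4.ge, h4.le]
  -- the vector y = Z₂ u
  have hyZ : Z₂ᴴ *ᵥ (Z₂ *ᵥ u) = a • u := by
    rw [Matrix.mulVec_mulVec]
    exact hu2
  have hysq : (∑ i, (Z₂ *ᵥ u) i ^ 2) = a := by
    rw [sqsum_mulVec Z₂ u, hu2, dotProduct_smul, dot_self_eq_sum_sq, hu1]
    simp
  -- bottom-right block bound
  set Bf := frob (X₂ * X₂ᴴ - Z₂ * Z₂ᴴ) with hBf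
  have hBf0 : 0 ≤ Bf := frob_nonneg _
  have hq1 : (Z₂ *ᵥ u) ⬝ᵥ ((Z₂ * Z₂ᴴ) *ᵥ (Z₂ *ᵥ u)) = a ^ 2 := by
    rw [← sqsum_conjT_mulVec Z₂ (Z₂ *ᵥ u), ]
    rw [show (Z₂ᴴ *ᵥ (Z₂ *ᵥ u)) = a • u from hyZ]
    simp only [Pi.smul_apply, smul_eq_mul, mul_pow]
    rw [← Finset.mul_sum, hu1, mul_one]
  have hq2 : (Z₂ *ᵥ u) ⬝ᵥ ((X₂ * X₂ᴴ) *ᵥ (Z₂ *ᵥ u)) ≤ s * a := by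
    rw [← sqsum_conjT_mulVec X₂ (Z₂ *ᵥ u)]
    calc ∑ j, (X₂ᴴ *ᵥ (Z₂ *ᵥ u)) j ^ 2
        ≤ lammax (Matrix.isHermitian_conjTranspose_mul_self X₂) * ∑ i, (Z₂ *ᵥ u) i ^ 2 :=
          sqsum_conjT_le_lammax X₂ (Z₂ *ᵥ u)
      _ ≤ s * a := by
          rw [hysq]
          exact mul_le_mul_of_nonneg_right hsle (le_of_lt ha0)
  have hBfa : a - s ≤ Bf := by
    have h3 : (Z₂ *ᵥ u) ⬝ᵥ ((Z₂ * Z₂ᴴ - X₂ * X₂ᴴ) *ᵥ (Z₂ *ᵥ u))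
        ≤ frob (Z₂ * Z₂ᴴ - X₂ * X₂ᴴ) * ∑ i, (Z₂ *ᵥ u) i ^ 2 := quadform_le_frob _ _
    have h4 : frob (Z₂ * Z₂ᴴ - X₂ * X₂ᴴ) = Bf := by
      rw [hBf, ← frob_neg (Z₂ * Z₂ᴴ - X₂ * X₂ᴴ), neg_sub]
    have h5 : (Z₂ *ᵥ u) ⬝ᵥ ((Z₂ * Z₂ᴴ - X₂ * X₂ᴴ) *ᵥ (Z₂ *ᵥ u))
        = a ^ 2 - (Z₂ *ᵥ u) ⬝ᵥ ((X₂ * X₂ᴴ) *ᵥ (Z₂ *ᵥ u)) := by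
      rw [Matrix.sub_mulVec, dotProduct_sub, hq1]
    rw [h4, h5, hysq] at h3
    have h6 : a ^ 2 - s * a ≤ Bf * a := by linarith [hq2, h3]
    have h7 : (a - s) * a ≤ Bf * a := by linarith [h6, sq_nonneg a, (by ring : (a - s) * a = a ^ 2 - s * a)]
    exact (mul_le_mul_iff_of_pos_right ha0).mp h7
  -- cross block bound
  set Cf := frob (Z₁ * Z₂ᴴ) with hCf
  have hCc : a ^ 2 * b ≤ Cf ^ 2 * a := by
    have h1 : (Z₁ * Z₂ᴴ) *ᵥ (Z₂ *ᵥ u) = a • (Z₁ *ᵥ u) := by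
      rw [← Matrix.mulVec_mulVec, hyZ, Matrix.mulVec_smul]
    have h2 : ∑ i, ((Z₁ * Z₂ᴴ) *ᵥ (Z₂ *ᵥ u)) i ^ 2 = a ^ 2 * ∑ i, (Z₁ *ᵥ u) i ^ 2 := by
      rw [h1]
      simp only [Pi.smul_apply, smul_eq_mul, mul_pow]
      rw [← Finset.mul_sum]
    have h3 : b ≤ ∑ i, (Z₁ *ᵥ u) i ^ 2 := by
      have hq := quadform_ge_lammin (Matrix.isHermitian_conjTranspose_mul_self Z₁) u
      rw [hu1, mul_one, ← hb] at hq
      rw [sqsum_mulVec Z₁ u]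
      exact hq
    have h4 := sqsum_mulVec_le_frob (Z₁ * Z₂ᴴ) (Z₂ *ᵥ u)
    rw [hysq, h2, ← hCf] at h4
    nlinarith [h3, h4, sq_nonneg a]
  -- lambda <= a + b
  have hlamab : lam ≤ a + b := by
    have h1 := quadform_ge_lammin
      (Matrix.isHermitian_conjTranspose_mul_self (Matrix.fromRows Z₁ Z₂)) v
    rw [hv1, mul_one, ← hlam] at h1
    have h2 : (Matrix.fromRows Z₁ Z₂)ᴴ * Matrix.fromRows Z₁ Z₂
        = Z₁ᴴ * Z₁ + Z₂ᴴ * Z₂ := by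
      rw [Matrix.conjTranspose_fromRows_eq_fromCols_conjTranspose,
        Matrix.fromCols_mul_fromRows]
    have h3 : v ⬝ᵥ (((Matrix.fromRows Z₁ Z₂)ᴴ * Matrix.fromRows Z₁ Z₂) *ᵥ v)
        = v ⬝ᵥ ((Z₁ᴴ * Z₁) *ᵥ v) + v ⬝ᵥ ((Z₂ᴴ * Z₂) *ᵥ v) := by
      rw [h2, Matrix.add_mulVec, dotProduct_add]
    have h4 : v ⬝ᵥ ((Z₁ᴴ * Z₁) *ᵥ v) = b := by
      rw [hv2, dotProduct_smul, dot_self_eq_sum_sq, hv1]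
      simp
    have h5 : v ⬝ᵥ ((Z₂ᴴ * Z₂) *ᵥ v) ≤ a := by
      have hq := quadform_le_lammax (Matrix.isHermitian_conjTranspose_mul_self Z₂) v
      rw [hv1, mul_one, ← ha] at hq
      exact hq
    linarith [h1, h3.le, h3.ge, h4.le, h4.ge, h5]
  -- block structure of the error matrix
  have hXH : (Matrix.fromBlocks X₁ 0 0 X₂)ᴴ
      = Matrix.fromBlocks X₁ᴴ 0 0 X₂ᴴ := by
    rw [Matrix.fromBlocks_conjTranspose]
    simp
  have hEeq : Matrix.fromBlocks X₁ 0 0 X₂ * (Matrix.fromBlocks X₁ 0 0 X₂)ᴴ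
        - Matrix.fromRows Z₁ Z₂ * (Matrix.fromRows Z₁ Z₂)ᴴ
      = Matrix.fromBlocks (X₁ * X₁ᴴ - Z₁ * Z₁ᴴ) (-(Z₁ * Z₂ᴴ)) (-(Z₂ * Z₁ᴴ))
          (X₂ * X₂ᴴ - Z₂ * Z₂ᴴ) := by
    rw [hXH, Matrix.fromBlocks_multiply,
      Matrix.conjTranspose_fromRows_eq_fromCols_conjTranspose,
      Matrix.fromRows_mul_fromCols]
    ext (i | i) (j | j) <;>
      simp [Matrix.sub_apply, Matrix.fromBlocks_apply₁₁, Matrix.fromBlocks_apply₁₂,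
        Matrix.fromBlocks_apply₂₁, Matrix.fromBlocks_apply₂₂]
  have hCross : frob (Z₂ * Z₁ᴴ) = Cf := by
    have ht : Z₂ * Z₁ᴴ = (Z₁ * Z₂ᴴ)ᵀ := by
      rw [Matrix.transpose_mul, real_conjT Z₂, real_conjT Z₁, Matrix.transpose_transpose]
    rw [ht, frob_transpose, hCf]
  have hFsplit : frob (Matrix.fromBlocks X₁ 0 0 X₂ * (Matrix.fromBlocks X₁ 0 0 X₂)ᴴ
        - Matrix.fromRows Z₁ Z₂ * (Matrix.fromRows Z₁ Z₂)ᴴ) ^ 2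
      = T ^ 2 + Cf ^ 2 + Cf ^ 2 + Bf ^ 2 := by
    rw [hEeq, frob_fromBlocks_sq, frob_neg, frob_neg, hCross, ← hT, ← hBf, ← hCf]
  exact final_arith a b lam mm s T Bf Cf
    (frob (Matrix.fromBlocks X₁ 0 0 X₂ * (Matrix.fromBlocks X₁ 0 0 X₂)ᴴ
      - Matrix.fromRows Z₁ Z₂ * (Matrix.fromRows Z₁ Z₂)ᴴ)) ρ
    ha0 hb0 hab hsm hT0 hTb hBf0 hBfa hCc hlam0 hlamab (frob_nonneg _) hFsplit hdist hρpos hρ
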